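/- arXiv:1809.05750 — 3 statements merged into one kernel-verified Lean document; each statement's English description precedes it below -/
import Mathlib

section
/- Let b be a positive integer, a an integer, and g₁ an odd positive integer. Then there exist integers m, n, t with gcd(t, b) = 1, gcd(m, 2n) = 1, gcd(m, b) = 1, and m^{g₁} - n² ≡ t²·a (mod b). -/
/-!
Choose `x` as the product of the primes of `b` not dividing `a`; then `u = x² + a` is a unit
mod `b`. Take `m` odd with `m u ≡ 1 (mod b)` and `t = m^((g₁+1)/2)`, so that `t² u ≡ m^g₁`.
Finally take `n ≡ t x (mod b)` coprime to `m`: then `m^g₁ - n² ≡ t² u - t² x² = t² a`.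
-/

theorem Int.isCoprime_of_mul_modEq_one {m u b : ℤ} (h : m * u ≡ 1 [ZMOD b]) : IsCoprime m b := by
  obtain ⟨w, hw⟩ := Int.modEq_iff_dvd.mp h
  exact ⟨u, w, by linear_combination -hw⟩

theorem exists_isCoprime_pow_add (a : ℤ) {b : ℕ} (hb : b ≠ 0) {k : ℕ} (hk : k ≠ 0) :
    ∃ x : ℤ, IsCoprime (x ^ k + a) b := by
  classical
  set x : ℤ := ∏ p ∈ b.primeFactors.filter (fun p : ℕ => ¬ (p : ℤ) ∣ a), (p : ℤ)
  refine ⟨x, Int.isCoprime_iff_nat_coprime.mpr <| Nat.coprime_of_dvd fun p hp hpu hpb_abs => ?_⟩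
  have hp' : Prime (p : ℤ) := Nat.prime_iff_prime_int.mp hp
  have hpb : p ∈ b.primeFactors := Nat.mem_primeFactors.mpr ⟨hp, by simpa using hpb_abs, hb⟩
  have hpx : (p : ℤ) ∣ x ↔ ¬ (p : ℤ) ∣ a := by
    rw [hp'.dvd_finsetProd_iff]
    constructor
    · rintro ⟨q, hq, hpq⟩
      obtain ⟨hqb, hqa⟩ := Finset.mem_filter.mp hq
      rwa [(Nat.prime_dvd_prime_iff_eq hp (Nat.prime_of_mem_primeFactors hqb)).mp
        (Int.natCast_dvd_natCast.mp hpq)]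
    · exact fun hpa => ⟨p, Finset.mem_filter.mpr ⟨hpb, hpa⟩, dvd_rfl⟩
  have hpxa : (p : ℤ) ∣ x ↔ (p : ℤ) ∣ a := by
    rw [← hp'.dvd_pow_iff_dvd hk]
    exact Int.dvd_iff_dvd_of_dvd_add (Int.natCast_dvd.mpr hpu)
  tauto

theorem exists_odd_mul_modEq_one {u b : ℤ} (h : IsCoprime u b) :
    ∃ m, Odd m ∧ m * u ≡ 1 [ZMOD b] := by
  obtain ⟨c, d, hcd⟩ := h
  rcases Int.even_or_odd c with hc | hc
  · have hb : Odd b := by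
      refine Int.not_even_iff_odd.mp fun hb => Int.not_even_one ?_
      rw [← hcd]
      exact (hc.mul_right u).add (hb.mul_left d)
    exact ⟨c + b, hc.add_odd hb, Int.modEq_iff_dvd.mpr ⟨d - u, by linear_combination -hcd⟩⟩
  · exact ⟨c, hc, Int.modEq_iff_dvd.mpr ⟨d, by linear_combination -hcd⟩⟩

theorem exists_modEq_isCoprime {m b : ℤ} (h : IsCoprime m b) (y : ℤ) :
    ∃ n, n ≡ y [ZMOD b] ∧ IsCoprime m n := by
  obtain ⟨p, q, hpq⟩ := h
  refine ⟨y + q * b * (1 - y), Int.modEq_iff_dvd.mpr ⟨-q * (1 - y), by ring⟩,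
    ⟨p * (1 - y), 1, by linear_combination (1 - y) * hpq⟩⟩

theorem stmt_3_general (b : ℕ) (hb : 0 < b) (a : ℤ) (g₁ : ℕ) (hodd : Odd g₁) :
    ∃ m n t : ℤ, Int.gcd t (b : ℤ) = 1 ∧ Int.gcd m (2 * n) = 1 ∧
      Int.gcd m (b : ℤ) = 1 ∧ m ^ g₁ - n ^ 2 ≡ t ^ 2 * a [ZMOD (b : ℤ)] := by
  obtain ⟨x, hx⟩ := exists_isCoprime_pow_add a hb.ne' two_ne_zero
  obtain ⟨m, hm_odd, hmu⟩ := exists_odd_mul_modEq_one hx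
  have hmb := Int.isCoprime_of_mul_modEq_one hmu
  obtain ⟨e, rfl⟩ := hodd
  set t := m ^ (e + 1)
  obtain ⟨n, hn, hmn⟩ := exists_modEq_isCoprime hmb (t * x)
  refine ⟨m, n, t, Int.isCoprime_iff_gcd_eq_one.mp hmb.pow_left,
    Int.isCoprime_iff_gcd_eq_one.mp ((Int.isCoprime_two_right.mpr hm_odd).mul_right hmn),
    Int.isCoprime_iff_gcd_eq_one.mp hmb, ?_⟩
  have hm_pow : m ^ (2 * e + 1) ≡ t ^ 2 * (x ^ 2 + a) [ZMOD b] := calc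
    m ^ (2 * e + 1) = m ^ (2 * e + 1) * 1 := (mul_one _).symm
    _ ≡ m ^ (2 * e + 1) * (m * (x ^ 2 + a)) [ZMOD b] := hmu.symm.mul_left _
    _ = t ^ 2 * (x ^ 2 + a) := by ring
  calc m ^ (2 * e + 1) - n ^ 2 ≡ t ^ 2 * (x ^ 2 + a) - (t * x) ^ 2 [ZMOD b] :=
        hm_pow.sub (hn.pow 2)
    _ = t ^ 2 * a := by ring

/-- For any positive modulus `b`, integer `a`, and odd positive exponent `g₁`,
there exist integers `m, n, t` with `gcd(t,b) = 1`, `gcd(m,2n) = 1`, `gcd(m,b) = 1`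
and `m^g₁ - n² ≡ t²·a (mod b)`. -/
theorem stmt_3 (b : ℕ) (hb : 0 < b) (a : ℤ) (g₁ : ℕ) (hg₁ : 0 < g₁) (hodd : Odd g₁) :
    ∃ m n t : ℤ, Int.gcd t (b : ℤ) = 1 ∧ Int.gcd m (2 * n) = 1 ∧
      Int.gcd m (b : ℤ) = 1 ∧ m ^ g₁ - n ^ 2 ≡ t ^ 2 * a [ZMOD (b : ℤ)] :=
  stmt_3_general b hb a g₁ hodd
end

section
/- Let m be an integer and t a positive odd squarefree-friendly integer coprime to 2m. Then φ_m(t²) = Σ_{d | t} μ²(d)·(m/d), where (m/d) denotes the Jacobi symbol and φ_m(t²) is the number of n mod t² with n² ≡ m (mod t²). -/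
/-!
Both sides are multiplicative in `t` (the left one by the Chinese remainder theorem), so it
suffices to compare them at `t = p ^ k` with `p` an odd prime not dividing `m`. The kernel of
`ZMod (p ^ (j + 1)) → ZMod (p ^ j)` (`j ≥ 1`) squares to zero, so, `2` and `m` being units, a
single Newton step lifts every square root of `m` uniquely. Hence `m` has as many square roots
modulo `p ^ (2k)` as modulo `p`, namely `1 + (m/p)`. On the right only `d = 1` and `d = p`
contribute, which gives `1 + (m/p)` as well.
-/

open ArithmeticFunction
open scoped ArithmeticFunction.Moebius ArithmeticFunction.zeta

theorem card_sqrts_eq_of_ker_mul_self_eq_zero {R S : Type*} [CommRing R] [CommRing S]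
    {f : R →+* S} (hf : Function.Surjective f) (hker : ∀ a ∈ RingHom.ker f, a * a = 0)
    (h2 : IsUnit (2 : R)) {m : R} (hm : IsUnit m) :
    Nat.card {x : R // x ^ 2 = m} = Nat.card {y : S // y ^ 2 = f m} := by
  refine Nat.card_eq_of_bijective (fun x => ⟨f x, by rw [← map_pow, x.2]⟩) ⟨?_, ?_⟩
  · rintro ⟨x, hx⟩ ⟨y, hy⟩ hxy
    have hε : y - x ∈ RingHom.ker f := by
      simpa [RingHom.mem_ker, sub_eq_zero] using (congrArg Subtype.val hxy).symm
    have hx_unit : IsUnit x := (isUnit_pow_iff two_ne_zero).mp (hx ▸ hm)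
    -- `y² - x² = 2x(y - x) + (y - x)²`, and the last term vanishes
    have h : 2 * x * (y - x) = 0 := by linear_combination hy - hx - hker _ hε
    exact Subtype.ext (sub_eq_zero.mp ((h2.mul hx_unit).mul_right_eq_zero.mp h)).symm
  · rintro ⟨y, hy⟩
    obtain ⟨x, rfl⟩ := hf y
    have hδ : x ^ 2 - m ∈ RingHom.ker f := by simp [RingHom.mem_ker, hy]
    obtain ⟨c, hc⟩ := (h2.mul hm).exists_left_inv
    -- Newton step: `x (1 - δ / 2m)` with `δ = x² - m` squares to `m` since `δ² = 0`
    refine ⟨⟨x * (1 - (x ^ 2 - m) * c), ?_⟩, Subtype.ext ?_⟩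
    · linear_combination (-(x ^ 2 - m)) * hc + (x ^ 2 * c ^ 2 - 2 * c) * hker _ hδ
    · simp [(RingHom.mem_ker).mp hδ]

theorem ZMod.mul_self_eq_zero_of_castHom_eq_zero {d n : ℕ} (hdn : d ∣ n) (hnd : n ∣ d ^ 2)
    {a : ZMod n} (ha : a ∈ RingHom.ker (ZMod.castHom hdn (ZMod d))) : a * a = 0 := by
  rw [← ZMod.intCast_zmod_cast a] at ha ⊢
  rw [RingHom.mem_ker, map_intCast, ZMod.intCast_zmod_eq_zero_iff_dvd] at ha
  obtain ⟨c, hc⟩ := ha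
  rw [← Int.cast_mul, ZMod.intCast_zmod_eq_zero_iff_dvd, hc]
  exact (Int.natCast_dvd_natCast.mpr hnd).trans ⟨c * c, by push_cast; ring⟩

noncomputable def sqrtCount (n : ℕ) (m : ℤ) : ℕ := Nat.card {x : ZMod n // x ^ 2 = (m : ZMod n)}

theorem sqrtCount_one (m : ℤ) : sqrtCount 1 m = 1 :=
  Nat.card_eq_one_iff_unique.mpr ⟨inferInstance, ⟨0, Subsingleton.elim _ _⟩⟩

theorem sqrtCount_mul (m : ℤ) {a b : ℕ} (hab : a.Coprime b) :
    sqrtCount (a * b) m = sqrtCount a m * sqrtCount b m := by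
  rw [sqrtCount, sqrtCount, sqrtCount, ← Nat.card_prod]
  refine Nat.card_congr <| ((ZMod.chineseRemainder hab).toEquiv.subtypeEquiv fun x => ?_).trans
    Equiv.subtypeProdEquivProd
  rw [← (ZMod.chineseRemainder hab).injective.eq_iff, RingEquiv.toEquiv_eq_coe,
    RingEquiv.coe_toEquiv, map_pow, map_intCast, Prod.ext_iff]
  simp

theorem sqrtCount_eq_of_dvd_of_dvd_sq {d n : ℕ} (m : ℤ) (hdn : d ∣ n) (hnd : n ∣ d ^ 2)
    (hcop : IsCoprime (n : ℤ) (2 * m)) : sqrtCount n m = sqrtCount d m := by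
  have hunit := (ZMod.coe_int_isUnit_iff_isCoprime (2 * m) n).mpr hcop
  rw [Int.cast_mul, Int.cast_ofNat, IsUnit.mul_iff] at hunit
  rw [sqrtCount, card_sqrts_eq_of_ker_mul_self_eq_zero (ZMod.ringHom_surjective _)
    (fun _ => ZMod.mul_self_eq_zero_of_castHom_eq_zero hdn hnd) hunit.1 hunit.2, map_intCast]
  rfl

theorem sqrtCount_pow {p k : ℕ} (m : ℤ) (hcop : IsCoprime (p : ℤ) (2 * m)) (hk : k ≠ 0) :
    sqrtCount (p ^ k) m = sqrtCount p m := by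
  induction k, Nat.one_le_iff_ne_zero.mpr hk using Nat.le_induction with
  | base => rw [pow_one]
  | succ k hk ih =>
    rw [← ih (by omega), sqrtCount_eq_of_dvd_of_dvd_sq m (pow_dvd_pow p k.le_succ)
      (by rw [← pow_mul]; exact pow_dvd_pow p (by omega)) (by exact_mod_cast hcop.pow_left)]

theorem sqrtCount_prime {p : ℕ} (hp : p.Prime) (hp2 : p ≠ 2) (m : ℤ) :
    (sqrtCount p m : ℤ) = 1 + jacobiSym m p := by
  classical
  have := Fact.mk hp
  rw [← jacobiSym.legendreSym.to_jacobiSym, add_comm, ← legendreSym.card_sqrts p hp2, sqrtCount,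
    Nat.card_eq_fintype_card, Set.toFinset_card]
  rfl

theorem sqrtCount_prime_pow {p k : ℕ} (m : ℤ) (hp : p.Prime) (hcop : IsCoprime (p : ℤ) (2 * m))
    (hk : k ≠ 0) : (sqrtCount (p ^ k) m : ℤ) = 1 + jacobiSym m p := by
  have hp2 : p ≠ 2 := by
    rintro rfl
    exact absurd (Int.isCoprime_iff_gcd_eq_one.mp hcop.of_mul_right_left) (by norm_num)
  rw [sqrtCount_pow m hcop hk, sqrtCount_prime hp hp2]

def sqfreeJacobi (m : ℤ) : ArithmeticFunction ℤ :=
  ⟨fun d => (μ d : ℤ) ^ 2 * jacobiSym m d, by simp⟩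

theorem sqfreeJacobi_apply (m : ℤ) (d : ℕ) : sqfreeJacobi m d = (μ d : ℤ) ^ 2 * jacobiSym m d :=
  rfl

theorem isMultiplicative_sqfreeJacobi (m : ℤ) : (sqfreeJacobi m).IsMultiplicative := by
  refine IsMultiplicative.iff_ne_zero.mpr ⟨by simp [sqfreeJacobi_apply], fun ha hb hab => ?_⟩
  simp only [sqfreeJacobi_apply, isMultiplicative_moebius.map_mul_of_coprime hab,
    jacobiSym.mul_right' m ha hb]
  ring

theorem sqfreeJacobi_mul_zeta_prime_pow (m : ℤ) {p k : ℕ} (hp : p.Prime) (hk : k ≠ 0) :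
    (sqfreeJacobi m * ζ) (p ^ k) = 1 + jacobiSym m p := by
  obtain ⟨j, rfl⟩ := Nat.exists_eq_add_of_le' (Nat.one_le_iff_ne_zero.mpr hk)
  have hhigher : ∀ i ∈ Finset.range j, sqfreeJacobi m (p ^ (i + 2)) = 0 := fun i _ => by
    simp [sqfreeJacobi_apply, moebius_apply_prime_pow hp]
  rw [coe_mul_zeta_apply, Nat.sum_divisors_prime_pow hp, Finset.sum_range_succ',
    Finset.sum_range_succ', Finset.sum_eq_zero hhigher]
  simp [sqfreeJacobi_apply, moebius_apply_prime hp, add_comm]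

theorem stmt_7_general (m : ℤ) (t : ℕ) (hcop : Int.gcd (2 * m) (t : ℤ) = 1) :
    (Nat.card {n : ZMod (t ^ 2) // n ^ 2 = (m : ZMod (t ^ 2))} : ℤ) =
      ∑ d ∈ t.divisors, (ArithmeticFunction.moebius d : ℤ) ^ 2 * jacobiSym m d := by
  have ht : t ≠ 0 := by
    rintro rfl
    rw [Nat.cast_zero, Int.gcd_zero_right] at hcop
    omega
  replace hcop : IsCoprime (t : ℤ) (2 * m) := (Int.isCoprime_iff_gcd_eq_one.mpr hcop).symm
  change (sqrtCount (t ^ 2) m : ℤ) = ∑ d ∈ t.divisors, sqfreeJacobi m d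
  have hrhs := (isMultiplicative_sqfreeJacobi m).mul isMultiplicative_zeta.natCast
  rw [← coe_mul_zeta_apply, hrhs.multiplicative_factorization _ ht,
    Nat.multiplicative_factorization (fun n => (sqrtCount (n ^ 2) m : ℤ))
      (fun a b hab => by simp [mul_pow, sqrtCount_mul m (hab.pow 2 2)]) (by simp [sqrtCount_one])
      ht]
  refine Finsupp.prod_congr fun p hp => ?_
  have hk : t.factorization p ≠ 0 := Finsupp.mem_support_iff.mp hp
  rw [Nat.support_factorization] at hp
  have hp_prime := Nat.prime_of_mem_primeFactors hp
  have hpcop : IsCoprime (p : ℤ) (2 * m) :=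
    hcop.of_isCoprime_of_dvd_left (Int.natCast_dvd_natCast.mpr (Nat.dvd_of_mem_primeFactors hp))
  rw [← pow_mul, sqrtCount_prime_pow m hp_prime hpcop (mul_ne_zero hk two_ne_zero),
    sqfreeJacobi_mul_zeta_prime_pow m hp_prime hk]

/-- For `t` a positive odd integer coprime to `2m`, the number of residues `n` mod `t²`
with `n² ≡ m (mod t²)` equals `Σ_{d ∣ t} μ(d)²·(m/d)` (Jacobi symbols). -/
theorem stmt_7 (m : ℤ) (t : ℕ) (ht : 0 < t) (hcop : Int.gcd (2 * m) (t : ℤ) = 1) :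
    (Nat.card {n : ZMod (t ^ 2) // n ^ 2 = (m : ZMod (t ^ 2))} : ℤ) =
      ∑ d ∈ t.divisors, (ArithmeticFunction.moebius d : ℤ) ^ 2 * jacobiSym m d :=
  stmt_7_general m t hcop
end

section
/- Let g ≥ 4 with g ≡ 2 (mod 4), and let k = g/2 (so k is odd). If a finite abelian group G contains an element of order 2k, then G contains an element of order g; conversely, if D ≥ 63 is squarefree with at least two odd prime factors and t²D = m^k - n² with gcd(m,2n)=1, m^k < (D+1)², then Cl(-D) contains an element of order g = 2k. -/
/-!
A class of order `2k`, `k` odd, is the product of classes of orders `k` and `2`. Every integer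
`x` of `ℚ(√-D)` satisfies `4 N(x) = u² + D s²` with `u, s ∈ ℤ`, and `s = 0` only for rational
integers `x`. For an odd prime `p ∣ D`, the ideal `(p, √-D)` squares to `(p)` but has no
generator: an element of norm `p` would force `s² = 1` (as `3p ≤ D`), then `p ∣ u` and
`u² = 4p - D ≤ p` give `D = 4p`, which is not squarefree. The coprime factors of
`(n + t√-D)(n - t√-D) = m^k` give `(n + t√-D) = 𝔞^k`. If `𝔞^d` were principal for a proper
divisor `d` of `k`, then `d ≤ k/3`, and a generator of norm `m^d` either is a rational integer,
so that `n ± t√-D` would be associate, or gives `D ≤ 4m^d`, contradicting `m^k < (D + 1)²`.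
-/

open NumberField
open scoped nonZeroDivisors

theorem ClassGroup.mk0_pow_eq_one_iff {R : Type*} [CommRing R] [IsDedekindDomain R]
    {I : Ideal R} (hI : I ∈ (Ideal R)⁰) (n : ℕ) :
    ClassGroup.mk0 ⟨I, hI⟩ ^ n = 1 ↔ (I ^ n).IsPrincipal := by
  rw [← map_pow, SubmonoidClass.mk_pow, ClassGroup.mk0_eq_one_iff]

theorem Ideal.span_natCast_pair_sq {R : Type*} [CommRing R] {a : R} {p e : ℕ}
    (ha : a ^ 2 = -(p * e)) (hpe : p.Coprime e) :
    span {(p : R), a} ^ 2 = span {(p : R)} := by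
  obtain ⟨x, y, hxy⟩ := (Nat.isCoprime_iff_coprime.2 hpe).map (Int.castRingHom R)
  simp only [eq_intCast, Int.cast_natCast] at hxy
  have hp : (p : R) ∈ span {(p : R), a} := subset_span (by simp)
  have ha' : a ∈ span {(p : R), a} := subset_span (by simp)
  apply le_antisymm
  · rw [sq, mul_le]
    intro r hr s hs
    obtain ⟨r₁, r₂, rfl⟩ := mem_span_pair.1 hr
    obtain ⟨s₁, s₂, rfl⟩ := mem_span_pair.1 hs
    refine mem_span_singleton'.2 ⟨r₁ * s₁ * p + (r₁ * s₂ + r₂ * s₁) * a - r₂ * s₂ * e, ?_⟩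
    linear_combination (-(r₂ * s₂)) * ha
  · rw [span_singleton_le_iff_mem, sq]
    convert sub_mem (mul_mem_left _ x (mul_mem_mul hp hp))
      (mul_mem_left _ y (mul_mem_mul ha' ha')) using 1
    linear_combination y * ha - p * hxy

theorem Ideal.exists_span_eq_pow_of_isCoprime {R : Type*} [CommRing R] [IsDedekindDomain R]
    {x y z : R} {k : ℕ} (h : IsCoprime x y) (hxy : x * y = z ^ k) :
    ∃ 𝔞 : Ideal R, span {x} = 𝔞 ^ k :=
  exists_eq_pow_of_mul_eq_pow_of_coprime ((isCoprime_span_singleton_iff x y).2 h)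
    (by rw [span_singleton_mul_span_singleton, hxy, span_singleton_pow])

theorem IsCoprime.of_mul_add {R : Type*} [CommRing R] {x y : R} (h : IsCoprime (x * y) (x + y)) :
    IsCoprime x y :=
  IsCoprime.of_add_mul_left_right (z := 1) (by simpa [add_comm] using h.of_mul_left_left)

theorem IsCoprime.isUnit_of_mul_eq_sq {R : Type*} [CommRing R] [IsDomain R] {x y c : R}
    (h : IsCoprime x y) (hx : x ≠ 0) (hxy : x * y = c ^ 2) (hc : Associated x c) : IsUnit x := by
  obtain ⟨u, rfl⟩ := hc
  have hy : y = x * u ^ 2 := mul_left_cancel₀ hx (by rw [hxy]; ring)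
  exact h.isUnit_of_dvd' dvd_rfl ⟨_, hy⟩

theorem Rat.exists_int_eq_of_squarefree {D : ℕ} (hD : Squarefree D) {s : ℚ} {w v : ℤ}
    (hw : D * s = w) (hv : D * s ^ 2 = v) : ∃ z : ℤ, s = z := by
  have hD0 : (D : ℚ) ≠ 0 := by exact_mod_cast hD.ne_zero
  have hwv : w ^ 2 = v * D := by
    have : (w : ℚ) ^ 2 = v * D := by rw [← hw, ← hv]; ring
    exact_mod_cast this
  obtain ⟨z, rfl⟩ :=
    ((Int.squarefree_natCast.2 hD).dvd_pow_iff_dvd two_ne_zero).1 ⟨v, by rw [hwv]; ring⟩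
  refine ⟨z, mul_left_cancel₀ hD0 ?_⟩
  rw [hw]; push_cast; ring

theorem Nat.three_mul_le_of_dvd_of_odd {d k : ℕ} (hd : d ∣ k) (hk : Odd k) (hdk : d ≠ k) :
    3 * d ≤ k := by
  obtain ⟨e, rfl⟩ := hd
  have he : Odd e := (Nat.odd_mul.1 hk).2
  have he1 : e ≠ 1 := by rintro rfl; simp at hdk
  obtain ⟨r, rfl⟩ := he
  have : 1 ≤ r := by omega
  nlinarith

theorem Nat.sq_succ_le_cube_of_le_four_mul {D M : ℕ} (hD : 63 ≤ D) (hsf : Squarefree D)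
    (hDM : D ≤ 4 * M) : (D + 1) ^ 2 ≤ M ^ 3 := by
  rcases Nat.lt_or_ge D 66 with h | h
  · interval_cases D
    · exact absurd (hsf 3 (by norm_num)) (by simp)
    · exact absurd (hsf 2 (by norm_num)) (by simp)
    · have : 17 ^ 3 ≤ M ^ 3 := Nat.pow_le_pow_left (by omega) 3
      omega
  · have : D ^ 3 ≤ (4 * M) ^ 3 := Nat.pow_le_pow_left hDM 3
    nlinarith

theorem four_mul_pow_ne_sq_add_mul_sq {D m d k : ℕ} (hD : 63 ≤ D) (hsf : Squarefree D)
    (hm : 0 < m) (h3d : 3 * d ≤ k) (hmD : m ^ k < (D + 1) ^ 2) {u s : ℤ} (hs : s ≠ 0) :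
    4 * (m : ℤ) ^ d ≠ u ^ 2 + D * s ^ 2 := by
  intro h
  have hDm : D ≤ 4 * m ^ d := by
    have hs1 : 1 ≤ s ^ 2 := by have := sq_pos_of_ne_zero hs; omega
    zify
    nlinarith [sq_nonneg u, mul_le_mul_of_nonneg_left hs1 (Nat.cast_nonneg (α := ℤ) D)]
  have hcube : (m ^ d) ^ 3 ≤ m ^ k := by
    rw [← pow_mul]
    exact Nat.pow_le_pow_right hm (by linarith)
  have := Nat.sq_succ_le_cube_of_le_four_mul hD hsf hDm
  omega

section Field

variable {K : Type*} [Field K] [CharZero K] {D : ℕ} {α : K}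

theorem exists_basis_one_sqrt (hD : D ≠ 0) (hα : α ^ 2 = -D)
    (hrank : Module.finrank ℚ K = 2) : ∃ b : Module.Basis (Fin 2) ℚ K, b 0 = 1 ∧ b 1 = α := by
  have hli : LinearIndependent ℚ ![1, α] := by
    refine linearIndependent_fin2.2 ⟨?_, fun a ha => ?_⟩
    · rintro (h : α = 0)
      simp [h, hD] at hα
    · have : ((-(a ^ 2 * D) : ℚ) : K) = 1 := by
        simp only [Matrix.cons_val_one, Matrix.cons_val_zero] at ha
        rw [← one_pow 2, ← ha, smul_pow, hα, Rat.smul_def]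
        push_cast; ring
      have : -(a ^ 2 * D) = (1 : ℚ) := by exact_mod_cast this
      nlinarith [sq_nonneg a, (Nat.cast_nonneg D : (0 : ℚ) ≤ D)]
  refine ⟨basisOfLinearIndependentOfCardEqFinrank hli (by simp [hrank]), ?_, ?_⟩ <;> simp

theorem leftMulMatrix_algebraMap_add_smul {b : Module.Basis (Fin 2) ℚ K} (hb0 : b 0 = 1)
    (hb1 : b 1 = α) (hα : α ^ 2 = -D) (a c : ℚ) :
    Algebra.leftMulMatrix b (algebraMap ℚ K a + c • α) = !![a, -D * c; c, a] := by
  have h0 : (algebraMap ℚ K a + c • α) * b 0 = a • b 0 + c • b 1 := by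
    rw [hb0, hb1, mul_one, Algebra.algebraMap_eq_smul_one]
  have h1 : (algebraMap ℚ K a + c • α) * b 1 = (-D * c) • b 0 + a • b 1 := by
    simp only [hb0, hb1, Algebra.smul_def, map_mul, map_neg, map_natCast]
    linear_combination algebraMap ℚ K c * hα
  ext i j
  rw [Algebra.leftMulMatrix_eq_repr_mul]
  fin_cases i <;> fin_cases j <;> simp only [Fin.zero_eta, Fin.mk_one, h0, h1] <;> simp

variable (hα : α ^ 2 = -D) (hrank : Module.finrank ℚ K = 2)
include hα hrank

theorem norm_algebraMap_add_smul (hD : D ≠ 0) (a c : ℚ) :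
    Algebra.norm ℚ (algebraMap ℚ K a + c • α) = a ^ 2 + D * c ^ 2 := by
  obtain ⟨b, hb0, hb1⟩ := exists_basis_one_sqrt hD hα hrank
  rw [Algebra.norm_eq_matrix_det b, leftMulMatrix_algebraMap_add_smul hb0 hb1 hα,
    Matrix.det_fin_two_of]
  ring

theorem trace_algebraMap_add_smul (hD : D ≠ 0) (a c : ℚ) :
    Algebra.trace ℚ K (algebraMap ℚ K a + c • α) = 2 * a := by
  obtain ⟨b, hb0, hb1⟩ := exists_basis_one_sqrt hD hα hrank
  rw [Algebra.trace_eq_matrix_trace b, leftMulMatrix_algebraMap_add_smul hb0 hb1 hα,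
    Matrix.trace_fin_two_of]
  ring

theorem exists_eq_algebraMap_add_smul (hD : D ≠ 0) (x : K) :
    ∃ a c : ℚ, x = algebraMap ℚ K a + c • α := by
  obtain ⟨b, hb0, hb1⟩ := exists_basis_one_sqrt hD hα hrank
  refine ⟨b.repr x 0, b.repr x 1, ?_⟩
  rw [Algebra.algebraMap_eq_smul_one, ← hb0, ← hb1]
  exact ((Fin.sum_univ_two _).symm.trans (b.sum_repr x)).symm

end Field

theorem NumberField.RingOfIntegers.exists_intCast_eq {K : Type*} [Field K] [CharZero K]
    {x : 𝓞 K} {a : ℚ} (hx : (x : K) = algebraMap ℚ K a) : ∃ c : ℤ, x = c := by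
  have ha : IsIntegral ℤ a := by
    rw [← isIntegral_algebraMap_iff (algebraMap ℚ K).injective, ← hx]
    exact x.isIntegral_coe
  obtain ⟨c, rfl⟩ := IsIntegrallyClosed.isIntegral_iff.1 ha
  exact ⟨c, RingOfIntegers.ext (by simp [hx])⟩

section SqrtNegD

variable {K : Type*} [Field K] {D : ℕ} {α : 𝓞 K} (hα : α ^ 2 = -D)
include hα

theorem NumberField.RingOfIntegers.coe_sq_eq_neg_natCast : (α : K) ^ 2 = -D := by
  simpa using congrArg ((↑) : 𝓞 K → K) hα

theorem add_mul_mul_sub_mul (n t : ℤ) :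
    ((n : 𝓞 K) + t * α) * (n - t * α) = ((n ^ 2 + D * t ^ 2 : ℤ) : 𝓞 K) := by
  push_cast
  linear_combination (-(t : 𝓞 K) ^ 2) * hα

theorem isCoprime_add_mul_sub_mul {n t : ℤ} (h : IsCoprime (n ^ 2 + D * t ^ 2) (2 * n)) :
    IsCoprime ((n : 𝓞 K) + t * α) (n - t * α) := by
  refine IsCoprime.of_mul_add ?_
  rw [add_mul_mul_sub_mul hα,
    show (n + t * α) + (n - t * α) = ((2 * n : ℤ) : 𝓞 K) by push_cast; ring]
  exact h.map (Int.castRingHom (𝓞 K))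

end SqrtNegD

section RingOfIntegers

variable {K : Type*} [Field K] [NumberField K] (hrank : Module.finrank ℚ K = 2)
include hrank

theorem absNorm_span_intCast (c : ℤ) :
    Ideal.absNorm (Ideal.span {(c : 𝓞 K)}) = c.natAbs ^ 2 := by
  rw [Ideal.absNorm_span_singleton, ← eq_intCast (algebraMap ℤ (𝓞 K)), Algebra.norm_algebraMap,
    RingOfIntegers.rank, hrank, Int.natAbs_pow]

theorem span_ne_span_intCast {ξ η : 𝓞 K} (hξη : IsCoprime ξ η)
    (hprod : ξ * η = (Ideal.absNorm (Ideal.span {ξ}) : 𝓞 K))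
    (h1 : 1 < Ideal.absNorm (Ideal.span {ξ})) (C : ℤ) :
    Ideal.span {ξ} ≠ Ideal.span {(C : 𝓞 K)} := by
  intro h
  have hC : Ideal.absNorm (Ideal.span {ξ}) = C.natAbs ^ 2 := by rw [h, absNorm_span_intCast hrank]
  have hξ0 : ξ ≠ 0 := by rintro rfl; simp at h1
  have hunit : IsUnit ξ := by
    refine hξη.isUnit_of_mul_eq_sq hξ0 ?_ (Ideal.span_singleton_eq_span_singleton.1 h)
    rw [hprod, hC, ← Int.cast_natCast, Nat.cast_pow, Int.natCast_natAbs, sq_abs, Int.cast_pow]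
  rw [Ideal.span_singleton_eq_top.2 hunit, Ideal.absNorm_top] at h1
  exact lt_irrefl _ h1

variable {D : ℕ} {α : 𝓞 K} (hα : α ^ 2 = -D)
include hα

theorem norm_intCast_add_intCast_mul (hD : D ≠ 0) (n t : ℤ) :
    Algebra.norm ℤ ((n : 𝓞 K) + t * α) = n ^ 2 + D * t ^ 2 := by
  have h : ((n + t * α : 𝓞 K) : K) = algebraMap ℚ K n + (t : ℚ) • (α : K) := by
    simp [Algebra.smul_def]
  have := norm_algebraMap_add_smul (RingOfIntegers.coe_sq_eq_neg_natCast hα) hrank hD n t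
  rw [← h, ← Algebra.coe_norm_int] at this
  exact_mod_cast this

theorem exists_four_mul_norm_eq (hsf : Squarefree D) (x : 𝓞 K) :
    ∃ u s : ℤ, 4 * Algebra.norm ℤ x = u ^ 2 + D * s ^ 2 ∧ (s = 0 → ∃ c : ℤ, x = c) := by
  have hαK := RingOfIntegers.coe_sq_eq_neg_natCast hα
  obtain ⟨a, c, hx⟩ := exists_eq_algebraMap_add_smul hαK hrank hsf.ne_zero (x : K)
  have hxα : ((x * α : 𝓞 K) : K) = algebraMap ℚ K (-D * c) + a • (α : K) := by
    rw [show ((x * α : 𝓞 K) : K) = x * α from rfl, hx]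
    simp only [Algebra.smul_def, map_mul, map_neg, map_natCast]
    linear_combination algebraMap ℚ K c * hαK
  have htr : (Algebra.trace ℤ (𝓞 K) x : ℚ) = 2 * a := by
    rw [Algebra.coe_trace_int, hx, trace_algebraMap_add_smul hαK hrank hsf.ne_zero]
  have htrα : (Algebra.trace ℤ (𝓞 K) (x * α) : ℚ) = 2 * (-D * c) := by
    rw [Algebra.coe_trace_int, hxα, trace_algebraMap_add_smul hαK hrank hsf.ne_zero]
  have hnorm : (Algebra.norm ℤ x : ℚ) = a ^ 2 + D * c ^ 2 := by
    rw [Algebra.coe_norm_int, hx, norm_algebraMap_add_smul hαK hrank hsf.ne_zero]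
  -- `2c` is rational with `D (2c)` and `D (2c)²` integral, so it is an integer
  obtain ⟨s, hs⟩ := Rat.exists_int_eq_of_squarefree hsf (s := 2 * c)
    (w := -Algebra.trace ℤ (𝓞 K) (x * α))
    (v := 4 * Algebra.norm ℤ x - Algebra.trace ℤ (𝓞 K) x ^ 2)
    (by push_cast; rw [htrα]; ring) (by push_cast; rw [htr, hnorm]; ring)
  refine ⟨Algebra.trace ℤ (𝓞 K) x, s, ?_, fun hs0 => ?_⟩
  · have : (4 * Algebra.norm ℤ x : ℚ) = (Algebra.trace ℤ (𝓞 K) x) ^ 2 + D * s ^ 2 := by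
      rw [htr, hnorm, ← hs]; ring
    exact_mod_cast this
  · refine RingOfIntegers.exists_intCast_eq (a := a) ?_
    have hc : c = 0 := by simpa [hs0] using hs
    rw [hx, hc, zero_smul, add_zero]

theorem exists_four_mul_absNorm_eq (hsf : Squarefree D) (x : 𝓞 K) :
    ∃ u s : ℤ, 4 * (Ideal.absNorm (Ideal.span {x}) : ℤ) = u ^ 2 + D * s ^ 2 ∧
      (s = 0 → ∃ c : ℤ, x = c) := by
  obtain ⟨u, s, h, hs⟩ := exists_four_mul_norm_eq hrank hα hsf x
  refine ⟨u, s, ?_, hs⟩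
  rw [Ideal.absNorm_span_singleton, Int.natCast_natAbs,
    abs_of_nonneg (by nlinarith [sq_nonneg u, sq_nonneg s]), h]

theorem absNorm_span_ne_prime (hsf : Squarefree D) {p : ℕ} (hp : p.Prime) (hpD : p ∣ D)
    (h3p : 3 * p ≤ D) (x : 𝓞 K) : Ideal.absNorm (Ideal.span {x}) ≠ p := by
  intro hx
  obtain ⟨u, s, hus, hs⟩ := exists_four_mul_absNorm_eq hrank hα hsf x
  rw [hx] at hus
  rcases eq_or_ne s 0 with rfl | hs0
  · obtain ⟨c, rfl⟩ := hs rfl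
    rw [absNorm_span_intCast hrank, sq] at hx
    exact Irreducible.not_isSquare hp ⟨_, hx.symm⟩
  · have h3p' : 3 * (p : ℤ) ≤ D := by exact_mod_cast h3p
    have hs1 : s ^ 2 = 1 := by
      have hs_pos : 0 < s ^ 2 := by positivity
      by_contra! h
      have h2 : 2 ≤ s ^ 2 := by omega
      nlinarith [sq_nonneg u, mul_le_mul_of_nonneg_left h2 (Nat.cast_nonneg (α := ℤ) D),
        (by exact_mod_cast hp.pos : (0 : ℤ) < p)]
    have hu : u ^ 2 = 4 * p - D := by linear_combination -hus - D * hs1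
    obtain ⟨v, rfl⟩ : (p : ℤ) ∣ u := by
      refine Int.Prime.dvd_pow' hp (k := 2) ?_
      obtain ⟨e, rfl⟩ := hpD
      exact ⟨4 - e, by rw [hu]; push_cast; ring⟩
    have hv : v = 0 := by
      by_contra hv
      have h1 : 1 ≤ v ^ 2 := by have := sq_pos_of_ne_zero hv; omega
      nlinarith [mul_le_mul_of_nonneg_left h1 (sq_nonneg (p : ℤ)), hp.two_le]
    have hD4 : D = 2 * 2 * p := by subst hv; simp at hu; omega
    exact absurd (hsf 2 ⟨p, hD4⟩) (by simp)

theorem exists_orderOf_eq_two_of_prime_dvd (hsf : Squarefree D) {p : ℕ} (hp : p.Prime)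
    (hpD : p ∣ D) (h3p : 3 * p ≤ D) : ∃ c : ClassGroup (𝓞 K), orderOf c = 2 := by
  set P : Ideal (𝓞 K) := Ideal.span {(p : 𝓞 K), α}
  have hP2 : P ^ 2 = Ideal.span {(p : 𝓞 K)} := by
    refine Ideal.span_natCast_pair_sq (e := D / p) ?_ ?_
    · rw [hα, ← Nat.cast_mul, Nat.mul_div_cancel' hpD]
    · exact Nat.coprime_of_squarefree_mul (by rwa [Nat.mul_div_cancel' hpD])
  have hPnorm : Ideal.absNorm P = p := by
    refine Nat.pow_left_injective two_ne_zero ?_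
    simp only [← map_pow, hP2]
    rw [← Int.cast_natCast, absNorm_span_intCast hrank, Int.natAbs_natCast]
  have hP0 : P ∈ (Ideal (𝓞 K))⁰ := by
    rw [← Ideal.absNorm_ne_zero_iff_mem_nonZeroDivisors, hPnorm]
    exact hp.ne_zero
  refine ⟨ClassGroup.mk0 ⟨P, hP0⟩, orderOf_eq_prime ?_ ?_⟩
  · rw [ClassGroup.mk0_pow_eq_one_iff, hP2]
    exact ⟨_, rfl⟩
  · rw [Ne, ClassGroup.mk0_eq_one_iff]
    rintro ⟨y, hy⟩
    exact absNorm_span_ne_prime hrank hα hsf hp hpD h3p y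
      (by rw [← Ideal.submodule_span_eq, ← hy, hPnorm])

theorem exists_orderOf_eq_of_pow_eq_sq_add_mul_sq (hD : 63 ≤ D) (hsf : Squarefree D) {k m : ℕ}
    {n t : ℤ} (hk : Odd k) (ht : t ≠ 0) (hm : (m : ℤ) ^ k = n ^ 2 + D * t ^ 2)
    (hcop : IsCoprime (m : ℤ) (2 * n)) (hmD : m ^ k < (D + 1) ^ 2) :
    ∃ c : ClassGroup (𝓞 K), orderOf c = k := by
  set ξ : 𝓞 K := n + t * α
  have hξη : ξ * (n - t * α) = (m : 𝓞 K) ^ k := by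
    rw [add_mul_mul_sub_mul hα, ← hm]
    push_cast; rfl
  have hcop' : IsCoprime ξ (n - t * α) := isCoprime_add_mul_sub_mul hα (hm ▸ hcop.pow_left)
  have hξ_norm : Ideal.absNorm (Ideal.span {ξ}) = m ^ k := by
    rw [Ideal.absNorm_span_singleton, norm_intCast_add_intCast_mul hrank hα hsf.ne_zero, ← hm]
    simp [Int.natAbs_pow]
  have hm1 : 1 < m ^ k := by
    have : (1 : ℤ) < m ^ k := by
      nlinarith [sq_nonneg n, sq_pos_of_ne_zero ht, (by exact_mod_cast hD : (63 : ℤ) ≤ D)]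
    exact_mod_cast this
  have hm0 : 0 < m := Nat.pos_of_ne_zero (by rintro rfl; simp [hk.pos.ne'] at hm1)
  obtain ⟨𝔞, h𝔞⟩ := Ideal.exists_span_eq_pow_of_isCoprime hcop' hξη
  have h𝔞_norm : Ideal.absNorm 𝔞 = m :=
    Nat.pow_left_injective hk.pos.ne' (by dsimp only; rw [← map_pow, ← h𝔞, hξ_norm])
  have h𝔞0 : 𝔞 ∈ (Ideal (𝓞 K))⁰ := by
    rw [← Ideal.absNorm_ne_zero_iff_mem_nonZeroDivisors, h𝔞_norm]
    exact hm0.ne'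
  set c := ClassGroup.mk0 ⟨𝔞, h𝔞0⟩
  have hdvd : orderOf c ∣ k :=
    orderOf_dvd_of_pow_eq_one ((ClassGroup.mk0_pow_eq_one_iff _ _).2 (h𝔞 ▸ ⟨ξ, rfl⟩))
  refine ⟨c, ?_⟩
  by_contra hne
  obtain ⟨x, hx⟩ := (ClassGroup.mk0_pow_eq_one_iff _ _).1 (pow_orderOf_eq_one c)
  rw [Ideal.submodule_span_eq] at hx
  obtain ⟨u, s, hus, hs⟩ := exists_four_mul_absNorm_eq hrank hα hsf x
  rw [← hx, map_pow, h𝔞_norm, Nat.cast_pow] at hus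
  rcases eq_or_ne s 0 with rfl | hs0
  · obtain ⟨C, rfl⟩ := hs rfl
    obtain ⟨e, he⟩ := hdvd
    refine span_ne_span_intCast hrank hcop' (by rw [hξ_norm, Nat.cast_pow, hξη]) (hξ_norm ▸ hm1)
      (C ^ e) ?_
    rw [h𝔞, he, pow_mul, hx, Ideal.span_singleton_pow, Int.cast_pow]
  · exact four_mul_pow_ne_sq_add_mul_sq hD hsf hm0 (Nat.three_mul_le_of_dvd_of_odd hdvd hk hne)
      hmD hs0 hus

end RingOfIntegers

theorem stmt_17_general (g k : ℕ) (hmod : g % 4 = 2) (hk : g = 2 * k) :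
    (∀ (G : Type) [CommGroup G] [Finite G],
        (∃ x : G, orderOf x = 2 * k) → ∃ x : G, orderOf x = g) ∧
    (∀ (D m n t : ℕ), 63 ≤ D → Squarefree D →
      (∃ p q : ℕ, p.Prime ∧ q.Prime ∧ Odd p ∧ Odd q ∧ p ≠ q ∧ p ∣ D ∧ q ∣ D) →
      0 < m → 0 < n → 0 < t →
      (t : ℤ) ^ 2 * (D : ℤ) = (m : ℤ) ^ k - (n : ℤ) ^ 2 →
      Nat.gcd m (2 * n) = 1 → m ^ k < (D + 1) ^ 2 →
      ∀ (K : Type) [Field K] [NumberField K] (α : K), α ^ 2 = -(D : K) →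
        Module.finrank ℚ K = 2 →
        ∃ c : ClassGroup (𝓞 K), orderOf c = g) := by
  have hk_odd : Odd k := Nat.odd_iff.2 (by omega)
  refine ⟨fun G _ _ ⟨x, hx⟩ => ⟨x, hk ▸ hx⟩, ?_⟩
  rintro D m n t hD hsf ⟨p, q, hp, hq, -, hq_odd, hpq, hpD, hqD⟩ - - ht hdiop hgcd hmk K _ _ α hα
    hrank
  have hα_int : IsIntegral ℤ α :=
    ⟨.X ^ 2 + .C (D : ℤ), Polynomial.monic_X_pow_add_C _ two_ne_zero, by simp [hα]⟩
  have ha : (⟨α, hα_int⟩ : 𝓞 K) ^ 2 = -D := RingOfIntegers.ext hα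
  have h3p : 3 * p ≤ D := by
    have hq3 : 3 ≤ q := by have := hq.two_le; have := Nat.odd_iff.1 hq_odd; omega
    have hqp : q * p ∣ D := ((Nat.coprime_primes hq hp).2 hpq.symm).mul_dvd_of_dvd_of_dvd hqD hpD
    exact (Nat.mul_le_mul_right p hq3).trans (Nat.le_of_dvd (by omega) hqp)
  obtain ⟨c₁, hc₁⟩ := exists_orderOf_eq_of_pow_eq_sq_add_mul_sq hrank ha hD hsf hk_odd
    (n := n) (t := t) (by positivity) (by linear_combination -hdiop)
    (by simpa using Nat.isCoprime_iff_coprime.2 hgcd) hmk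
  obtain ⟨c₂, hc₂⟩ := exists_orderOf_eq_two_of_prime_dvd hrank ha hsf hp hpD h3p
  refine ⟨c₁ * c₂, ?_⟩
  rw [(Commute.all c₁ c₂).orderOf_mul_eq_mul_orderOf_of_coprime
    (by rw [hc₁, hc₂]; exact Nat.coprime_two_right.2 hk_odd), hc₁, hc₂, hk, mul_comm]

/-- The case `g ≡ 2 (mod 4)`, `g = 2k` with `k` odd: (i) a finite abelian group with an
element of order `2k` has an element of order `g`; (ii) if `D ≥ 63` is squarefree with at
least two odd prime factors and `t²D = m^k - n²` with `gcd(m, 2n) = 1`, `m^k < (D+1)²`,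
then the class group of `ℚ(√-D)` contains an element of order `g = 2k`. -/
theorem stmt_17 (g k : ℕ) (hg : 4 ≤ g) (hmod : g % 4 = 2) (hk : g = 2 * k) :
    (∀ (G : Type) [CommGroup G] [Finite G],
        (∃ x : G, orderOf x = 2 * k) → ∃ x : G, orderOf x = g) ∧
    (∀ (D m n t : ℕ), 63 ≤ D → Squarefree D →
      (∃ p q : ℕ, p.Prime ∧ q.Prime ∧ Odd p ∧ Odd q ∧ p ≠ q ∧ p ∣ D ∧ q ∣ D) →
      0 < m → 0 < n → 0 < t →
      (t : ℤ) ^ 2 * (D : ℤ) = (m : ℤ) ^ k - (n : ℤ) ^ 2 →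
      Nat.gcd m (2 * n) = 1 → m ^ k < (D + 1) ^ 2 →
      ∀ (K : Type) [Field K] [NumberField K] (α : K), α ^ 2 = -(D : K) →
        Module.finrank ℚ K = 2 →
        ∃ c : ClassGroup (𝓞 K), orderOf c = g) :=
  stmt_17_general g k hmod hk
end
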